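/- With W orthogonal, s ∈ ℝ^m, c > 0, suppose γ ∈ ℝ^m satisfies −c𝟙 ≤ γ ≤ c𝟙 and λ = max(−W(s + γ), 0) componentwise. Then θ = s + γ + Wᵀλ satisfies Wθ ≥ 0, i.e., θ is feasible for the primal constraint. -/
import Mathlib


open Finset Matrix

/-- Feasibility of the SPIRAL dual iterate: with `λ = max(−W(s+γ), 0)` and
`θ = s + γ + Wᵀλ`, one has `Wθ ≥ 0`. -/
theorem stmt4 (m : ℕ) (W : Matrix (Fin m) (Fin m) ℝ)
    (hW1 : Wᵀ * W = 1) (hW2 : W * Wᵀ = 1)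
    (s γ : Fin m → ℝ) (c : ℝ) (hc : 0 < c)
    (hγ : ∀ i, -c ≤ γ i ∧ γ i ≤ c)
    (lam : Fin m → ℝ) (hlam : lam = fun i => max (-(W.mulVec (s + γ) i)) 0) :
    ∀ i, 0 ≤ W.mulVec (s + γ + Wᵀ.mulVec lam) i := by
  intro i
  have key : W.mulVec (s + γ + Wᵀ.mulVec lam) = W.mulVec (s + γ) + lam := by
    rw [Matrix.mulVec_add, Matrix.mulVec_mulVec, hW2, Matrix.one_mulVec]
  rw [key]
  simp only [Pi.add_apply, hlam]
  rcases le_or_gt 0 (W.mulVec (s + γ) i) with h | h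
  · simp [max_eq_right (neg_nonpos.mpr h)]; linarith
  · rw [max_eq_left (by linarith)]; linarith
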